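/- arXiv:2401.01471 — 2 statements merged into one kernel-verified Lean document; each statement's English description precedes it below -/
import Mathlib

section
/- Every n-by-n monomial matrix is permutation-similar to a direct sum of matrices of the form K_{y_i}. Precisely: if A = D_x P is an n-by-n monomial matrix (D_x an invertible diagonal matrix, P a permutation matrix), then there exist an n-by-n permutation matrix Q, an integer k with 1 ≤ k ≤ n, positive integers n_1,…,n_k with n_1 + ⋯ + n_k = n, and vectors y_i ∈ ℂ^{n_i}, obtained by partitioning y = Qᵀx into consecutive blocks of sizes n_1,…,n_k, such that Qᵀ A Q = K_{y_1} ⊕ K_{y_2} ⊕ ⋯ ⊕ K_{y_k}. -/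
/-!
Cut `Fin n` into the cycles of `σ` and list each cycle as `a, σ a, σ² a, …`. In these
coordinates `σ` acts on every block of size `m` as the rotation `finRotate m`, so
`D_x P_σ`, reindexed this way, is block diagonal with blocks `K_y`. Laying the blocks out
consecutively through `finSigmaFinEquiv` turns the reindexing into a conjugation by a
permutation matrix.
-/

open Matrix

/-- The `m`-by-`m` cyclic permutation matrix `C_m` with `(i,j)`-entry `δ_{π(i),j}`,
where `π(i) = (i mod m) + 1` (realized 0-based by `finRotate m : i ↦ i + 1`). -/
noncomputable def cycMat (m : ℕ) : Matrix (Fin m) (Fin m) ℂ :=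
  (finRotate m).permMatrix ℂ

/-- `K_y := D_y C_m` for `y ∈ ℂ^m`. -/
noncomputable def Kmat {m : ℕ} (y : Fin m → ℂ) : Matrix (Fin m) (Fin m) ℂ :=
  Matrix.diagonal y * cycMat m

open Function

theorem Fin.val_finRotate {m : ℕ} (j : Fin m) : (finRotate m j : ℕ) = (j + 1) % m := by
  have := j.neZero
  rw [finRotate_apply, Fin.val_add, Fin.val_one', Nat.add_mod_mod]

theorem Fin.sum_Iio_eq_sum_castLE {M : Type*} [AddCommMonoid M] {k : ℕ} (f : Fin k → M)
    (i : Fin k) : ∑ l ∈ Finset.Iio i, f l = ∑ j : Fin i, f (Fin.castLE i.2.le j) := by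
  have hIio : Finset.Iio i = Finset.univ.map (Fin.castLEEmb i.2.le) := by
    ext l
    simp only [Finset.mem_Iio, Finset.mem_map, Finset.mem_univ, true_and, Fin.castLEEmb_apply]
    exact ⟨fun h => ⟨⟨l, h⟩, rfl⟩, by rintro ⟨j, rfl⟩; exact j.2⟩
  rw [hIio, Finset.sum_map]
  rfl

theorem finSigmaFinEquiv_apply_mk {k : ℕ} {n : Fin k → ℕ} (i : Fin k) (j : Fin (n i)) :
    (finSigmaFinEquiv ⟨i, j⟩ : ℕ) = ∑ l ∈ Finset.Iio i, n l + j := by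
  rw [finSigmaFinEquiv_apply, Fin.sum_Iio_eq_sum_castLE]

namespace Equiv.Perm

variable {α : Type*} (σ : Perm α)

theorem pow_mod_minimalPeriod_apply (a : α) (i : ℕ) :
    (σ ^ (i % minimalPeriod σ a)) a = (σ ^ i) a := by
  simp only [coe_pow, iterate_mod_minimalPeriod_eq]

abbrev CycleIndex : Type _ := Σ q : Quotient (SameCycle.setoid σ), Fin (minimalPeriod σ q.out)

noncomputable def cyclePoint (p : σ.CycleIndex) : α := (σ ^ (p.2 : ℕ)) p.1.out

theorem apply_cyclePoint (q : Quotient (SameCycle.setoid σ)) (j : Fin (minimalPeriod σ q.out)) :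
    σ (σ.cyclePoint ⟨q, j⟩) = σ.cyclePoint ⟨q, finRotate _ j⟩ := by
  rw [cyclePoint, cyclePoint, Fin.val_finRotate, pow_mod_minimalPeriod_apply, pow_succ', mul_apply]

theorem cyclePoint_injective : Injective σ.cyclePoint := by
  rintro ⟨q, j⟩ ⟨q', j'⟩ h
  obtain rfl : q = q' := by
    have hsame : σ.SameCycle ((σ ^ (j : ℕ)) q.out) ((σ ^ (j' : ℕ)) q'.out) := by
      rw [show (σ ^ (j : ℕ)) q.out = (σ ^ (j' : ℕ)) q'.out from h]
    exact Quotient.out_equiv_out.1 (sameCycle_pow_left.1 (sameCycle_pow_right.1 hsame))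
  have hj : (j : ℕ) = j' :=
    iterate_injOn_Iio_minimalPeriod j.2 j'.2 (by simpa only [cyclePoint, coe_pow] using h)
  rw [Fin.ext hj]

variable [Finite α]

theorem minimalPeriod_pos (a : α) : 0 < minimalPeriod σ a :=
  NeZero.pos (minimalPeriod (σ • ·) a)

theorem cyclePoint_surjective : Surjective σ.cyclePoint := by
  intro a
  obtain ⟨i, -, hi⟩ := (Quotient.mk_out (s := SameCycle.setoid σ) a).exists_pow_eq'
  exact ⟨⟨⟦a⟧, ⟨i % _, Nat.mod_lt _ (σ.minimalPeriod_pos _)⟩⟩,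
    (σ.pow_mod_minimalPeriod_apply _ i).trans hi⟩

noncomputable def cyclePointEquiv : σ.CycleIndex ≃ α :=
  Equiv.ofBijective σ.cyclePoint ⟨σ.cyclePoint_injective, σ.cyclePoint_surjective⟩

theorem exists_sigma_fin_equiv_finRotate :
    ∃ (k : ℕ) (m : Fin k → ℕ) (g : (Σ i : Fin k, Fin (m i)) ≃ α),
      (∀ i, 0 < m i) ∧ ∀ i j, σ (g ⟨i, j⟩) = g ⟨i, finRotate _ j⟩ := by
  let w := (Finite.equivFin (Quotient (SameCycle.setoid σ))).symm
  exact ⟨_, fun i => minimalPeriod σ (w i).out,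
    (Equiv.sigmaCongrLeft w).trans σ.cyclePointEquiv, fun i => σ.minimalPeriod_pos _,
    fun i j => σ.apply_cyclePoint _ j⟩

end Equiv.Perm

theorem Matrix.diagonal_mul_permMatrix_apply {α R : Type*} [DecidableEq α] [Fintype α]
    [NonAssocSemiring R] (x : α → R) (σ : Equiv.Perm α) (a b : α) :
    (diagonal x * σ.permMatrix R) a b = if σ a = b then x a else 0 := by
  simp [diagonal_mul, PEquiv.toMatrix_apply]

theorem Matrix.transpose_permMatrix_mul_mul_permMatrix {α R : Type*} [DecidableEq α]
    [Fintype α] [NonAssocSemiring R] (τ : Equiv.Perm α) (M : Matrix α α R) :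
    (τ.permMatrix R)ᵀ * M * τ.permMatrix R = M.submatrix τ.symm τ.symm := by
  rw [transpose_permMatrix, PEquiv.toMatrix_toPEquiv_mul, PEquiv.mul_toMatrix_toPEquiv]
  rfl

theorem Kmat_apply {m : ℕ} (y : Fin m → ℂ) (u v : Fin m) :
    Kmat y u v = if finRotate m u = v then y u else 0 :=
  diagonal_mul_permMatrix_apply y (finRotate m) u v

theorem diagonal_mul_permMatrix_submatrix_eq_blockDiagonal' {α ι : Type*} [DecidableEq α]
    [Fintype α] [DecidableEq ι] {m : ι → ℕ} (σ : Equiv.Perm α) (g : (Σ i, Fin (m i)) ≃ α)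
    (hg : ∀ i j, σ (g ⟨i, j⟩) = g ⟨i, finRotate _ j⟩) (x : α → ℂ) :
    (diagonal x * σ.permMatrix ℂ).submatrix g g =
      blockDiagonal' fun i => Kmat fun j => x (g ⟨i, j⟩) := by
  ext ⟨i, j⟩ ⟨i', j'⟩
  simp only [submatrix_apply, diagonal_mul_permMatrix_apply, hg, g.apply_eq_iff_eq,
    blockDiagonal'_apply]
  by_cases hi : i = i'
  · subst hi
    simp [Kmat_apply]
  · simp [hi]

theorem frobenius_normal_form_monomial_general {n : ℕ} (hn : 0 < n)
    (x : Fin n → ℂ) (σ : Equiv.Perm (Fin n))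
    (A : Matrix (Fin n) (Fin n) ℂ) (hA : A = Matrix.diagonal x * σ.permMatrix ℂ) :
    ∃ (k : ℕ), 1 ≤ k ∧ k ≤ n ∧
      ∃ (ns : Fin k → ℕ), (∀ i, 0 < ns i) ∧ (∑ i, ns i) = n ∧
        ∃ (τ : Equiv.Perm (Fin n)) (e : (Σ i : Fin k, Fin (ns i)) ≃ Fin n),
          (∀ (i : Fin k) (j : Fin (ns i)),
            ((e ⟨i, j⟩ : Fin n) : ℕ) = (∑ l ∈ Finset.Iio i, ns l) + (j : ℕ)) ∧
          (τ.permMatrix ℂ)ᵀ * A * τ.permMatrix ℂ =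
            (Matrix.blockDiagonal' fun i =>
                Kmat fun j => ((τ.permMatrix ℂ)ᵀ *ᵥ x) (e ⟨i, j⟩)).submatrix
              e.symm e.symm := by
  obtain ⟨k, ns, g, hpos, hg⟩ := σ.exists_sigma_fin_equiv_finRotate
  have hsum : ∑ i, ns i = n := by simpa using Fintype.card_congr g
  have hk : k ≤ n := by
    simpa [hsum] using Finset.card_nsmul_le_sum Finset.univ ns 1 fun i _ => hpos i
  let e := finSigmaFinEquiv.trans (finCongr hsum)
  let τ : Equiv.Perm (Fin n) := g.symm.trans e
  have hy : ∀ p, ((τ.permMatrix ℂ)ᵀ *ᵥ x) (e p) = x (g p) := fun p => by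
    simp [permMatrix_mulVec, τ]
  refine ⟨k, (g.symm ⟨0, hn⟩).1.pos, hk, ns, hpos, hsum, τ, e,
    fun i j => finSigmaFinEquiv_apply_mk i j, ?_⟩
  simp only [hy]
  rw [hA, transpose_permMatrix_mul_mul_permMatrix,
    ← diagonal_mul_permMatrix_submatrix_eq_blockDiagonal' σ g hg, submatrix_submatrix]
  rfl

/-- **Frobenius normal form for monomial matrices.**
If `A = D_x P` is an `n`-by-`n` monomial matrix (`D_x` invertible diagonal, `P = P_σ` a
permutation matrix), then there are `k` with `1 ≤ k ≤ n`, positive block sizes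
`n_1, …, n_k` summing to `n`, and a permutation matrix `Q = P_τ` such that, partitioning
`y = Qᵀ x` into consecutive blocks `y_i ∈ ℂ^{n_i}` (via the order-preserving bijection
`e : Σ i, Fin (n_i) ≃ Fin n`, `e ⟨i, j⟩ = n_1 + ⋯ + n_{i-1} + j`), we have
`Qᵀ A Q = K_{y_1} ⊕ ⋯ ⊕ K_{y_k}`. -/
theorem frobenius_normal_form_monomial {n : ℕ} (hn : 0 < n)
    (x : Fin n → ℂ) (hx : ∀ i, x i ≠ 0) (σ : Equiv.Perm (Fin n))
    (A : Matrix (Fin n) (Fin n) ℂ) (hA : A = Matrix.diagonal x * σ.permMatrix ℂ) :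
    ∃ (k : ℕ), 1 ≤ k ∧ k ≤ n ∧
      ∃ (ns : Fin k → ℕ), (∀ i, 0 < ns i) ∧ (∑ i, ns i) = n ∧
        ∃ (τ : Equiv.Perm (Fin n)) (e : (Σ i : Fin k, Fin (ns i)) ≃ Fin n),
          (∀ (i : Fin k) (j : Fin (ns i)),
            ((e ⟨i, j⟩ : Fin n) : ℕ) = (∑ l ∈ Finset.Iio i, ns l) + (j : ℕ)) ∧
          (τ.permMatrix ℂ)ᵀ * A * τ.permMatrix ℂ =
            (Matrix.blockDiagonal' fun i =>
                Kmat fun j => ((τ.permMatrix ℂ)ᵀ *ᵥ x) (e ⟨i, j⟩)).submatrix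
              e.symm e.symm :=
  frobenius_normal_form_monomial_general hn x σ A hA
end

section
/- Let n be a positive integer and p ∈ ℝ[t]. If p ∈ 𝒫ₙ^{mon}, i.e., p(A) is entrywise nonnegative for every entrywise nonnegative n-by-n monomial matrix A, then p_{(r,k)} ∈ 𝒫₁ for every k ∈ {1,…,n} and every r ∈ {0,…,k−1}. -/
/-!
Take `A = c • P` with `c > 0` and `P` the permutation matrix of the `k`-cycle
`(0 1 … k-1)`. Then `A` is a nonnegative monomial matrix and `Pᵐ` sends `0` to `m mod k`,
so the `(0, r)` entry of `p(A) = ∑ aₘ cᵐ Pᵐ` is exactly `p_{(r,k)}(c)`.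
Nonnegativity at `c = 0` follows by continuity.
-/

open Matrix

/-- The `r mod k`-part of `p`: `p_{(r,k)}(t) := Σ_{j ≤ deg p, j mod k = r} a_j t^j`. -/
noncomputable def polyPart (p : Polynomial ℝ) (k r : ℕ) : Polynomial ℝ :=
  ∑ j ∈ Finset.range (p.natDegree + 1),
    if j % k = r then Polynomial.C (p.coeff j) * Polynomial.X ^ j else 0

/-- `A` is a monomial (generalized permutation) matrix: `A = D P` with `D` an
invertible diagonal matrix and `P` a permutation matrix. -/
def IsMonomialMatrix {n : ℕ} (A : Matrix (Fin n) (Fin n) ℝ) : Prop :=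
  ∃ (d : Fin n → ℝ) (σ : Equiv.Perm (Fin n)),
    (∀ i, d i ≠ 0) ∧ A = Matrix.diagonal d * σ.permMatrix ℝ

open Polynomial

theorem Matrix.permMatrix_pow {ι R : Type*} [DecidableEq ι] [Fintype ι] [Semiring R]
    (σ : Equiv.Perm ι) (m : ℕ) : (σ ^ m).permMatrix R = σ.permMatrix R ^ m := by
  induction m with
  | zero => simp
  | succ m ih => rw [pow_succ, permMatrix_mul, ih, pow_succ']

theorem Matrix.permMatrix_apply {ι R : Type*} [DecidableEq ι] [Zero R] [One R]
    (σ : Equiv.Perm ι) (i j : ι) : σ.permMatrix R i j = if σ i = j then 1 else 0 := by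
  simp [PEquiv.toMatrix_apply, eq_comm]

theorem aeval_smul_permMatrix_apply {ι R : Type*} [DecidableEq ι] [Fintype ι] [CommSemiring R]
    (σ : Equiv.Perm ι) (c : R) (p : R[X]) (i j : ι) :
    aeval (c • σ.permMatrix R) p i j =
      ∑ m ∈ Finset.range (p.natDegree + 1),
        if (σ ^ m) i = j then p.coeff m * c ^ m else 0 := by
  rw [aeval_eq_sum_range, Matrix.sum_apply]
  refine Finset.sum_congr rfl fun m _ => ?_
  rw [_root_.smul_pow, ← permMatrix_pow, Matrix.smul_apply, Matrix.smul_apply,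
    permMatrix_apply]
  split_ifs <;> simp [mul_comm]

theorem smul_permMatrix_nonneg {ι R : Type*} [DecidableEq ι] [Semiring R] [PartialOrder R]
    [IsOrderedRing R] (σ : Equiv.Perm ι) {c : R} (hc : 0 ≤ c) (i j : ι) :
    0 ≤ (c • σ.permMatrix R) i j := by
  rw [Matrix.smul_apply, permMatrix_apply]
  split_ifs <;> simp [hc]

theorem isMonomialMatrix_smul_permMatrix {n : ℕ} (σ : Equiv.Perm (Fin n)) {c : ℝ}
    (hc : c ≠ 0) :
    IsMonomialMatrix (c • σ.permMatrix ℝ) :=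
  ⟨fun _ => c, σ, fun _ => hc, smul_eq_diagonal_mul _ c⟩

theorem Fin.coe_cycleRange_pow_apply {n : ℕ} {i j : Fin n} (hij : i ≤ j) (m : ℕ) :
    ((Fin.cycleRange j ^ m) i : ℕ) = (i + m) % (j + 1) := by
  induction m with
  | zero => simp [Nat.mod_eq_of_lt (Nat.lt_succ_of_le hij)]
  | succ m ih =>
    set x := (Fin.cycleRange j ^ m) i
    have hxj : x ≤ j := Fin.le_def.mpr <| by
      rw [ih]; exact Nat.le_of_lt_succ (Nat.mod_lt _ j.succ_pos)
    rw [pow_succ', Equiv.Perm.mul_apply, coe_cycleRange_of_le hxj, ← add_assoc,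
      ← Nat.mod_add_mod, ← ih]
    split_ifs with hx
    · rw [hx, Nat.mod_self]
    · exact (Nat.mod_eq_of_lt (by omega)).symm

theorem eval_polyPart (p : ℝ[X]) (k r : ℕ) (c : ℝ) :
    (polyPart p k r).eval c =
      ∑ m ∈ Finset.range (p.natDegree + 1), if m % k = r then p.coeff m * c ^ m else 0 := by
  simp only [polyPart, eval_finsetSum]
  refine Finset.sum_congr rfl fun m _ => ?_
  split_ifs <;> simp

theorem eval_polyPart_eq_aeval_cycleRange_apply {n k r : ℕ} (hk : 1 ≤ k) (hkn : k ≤ n)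
    (hr : r < k) (p : ℝ[X]) (c : ℝ) :
    (polyPart p k r).eval c =
      aeval (c • (Fin.cycleRange (⟨k - 1, by omega⟩ : Fin n)).permMatrix ℝ) p
        ⟨0, by omega⟩ ⟨r, by omega⟩ := by
  rw [eval_polyPart, aeval_smul_permMatrix_apply]
  refine Finset.sum_congr rfl fun m _ => ?_
  have hcycle := Fin.coe_cycleRange_pow_apply (i := (⟨0, by omega⟩ : Fin n))
    (j := ⟨k - 1, by omega⟩) (Fin.le_def.mpr (Nat.zero_le _)) m
  simp only [zero_add, Nat.sub_add_cancel hk] at hcycle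
  simp only [Fin.ext_iff, hcycle]

theorem nonneg_of_forall_pos_nonneg {f : ℝ → ℝ} (hf : Continuous f)
    (hpos : ∀ x, 0 < x → 0 ≤ f x) {a : ℝ} (ha : 0 ≤ a) : 0 ≤ f a := by
  have hclosed : IsClosed {x | 0 ≤ f x} := isClosed_le continuous_const hf
  exact (hclosed.closure_subset_iff (s := Set.Ioi 0)).mpr hpos (by rwa [closure_Ioi])

theorem polyPart_of_mem_Pn_mon_general (n : ℕ) (p : Polynomial ℝ)
    (h : ∀ A : Matrix (Fin n) (Fin n) ℝ, IsMonomialMatrix A → (∀ i j, 0 ≤ A i j) →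
      ∀ i j, 0 ≤ Polynomial.aeval A p i j) :
    ∀ k, 1 ≤ k → k ≤ n → ∀ r < k, ∀ a : ℝ, 0 ≤ a → 0 ≤ (polyPart p k r).eval a := by
  intro k hk hkn r hr a ha
  refine nonneg_of_forall_pos_nonneg (polyPart p k r).continuous (fun c hc => ?_) ha
  rw [eval_polyPart_eq_aeval_cycleRange_apply hk hkn hr]
  exact h _ (isMonomialMatrix_smul_permMatrix _ hc.ne') (smul_permMatrix_nonneg _ hc.le) _ _

/-- Let `n ≥ 1` and `p ∈ ℝ[t]`. If `p ∈ 𝒫ₙ^{mon}`, i.e., `p(A)` is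
entrywise nonnegative for every entrywise nonnegative `n`-by-`n` monomial matrix `A`,
then `p_{(r,k)} ∈ 𝒫₁` for every `k ∈ {1,…,n}` and every `r ∈ {0,…,k-1}`. -/
theorem polyPart_of_mem_Pn_mon (n : ℕ) (hn : 0 < n) (p : Polynomial ℝ)
    (h : ∀ A : Matrix (Fin n) (Fin n) ℝ, IsMonomialMatrix A → (∀ i j, 0 ≤ A i j) →
      ∀ i j, 0 ≤ Polynomial.aeval A p i j) :
    ∀ k, 1 ≤ k → k ≤ n → ∀ r < k, ∀ a : ℝ, 0 ≤ a → 0 ≤ (polyPart p k r).eval a :=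
  polyPart_of_mem_Pn_mon_general n p h
end
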